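/- Let Ω ⊂ ℝ² be open, x₀ ∈ Ω, d > 0 with the closed ball of radius d around x₀ contained in Ω, and let u, v ∈ C²(Ω) be harmonic in B_d(x₀) \ {x₀}. Then the quantity P(θ) := −2θ ∫_{∂B_θ(x₀)} ⟨∇u, ν⟩⟨∇v, ν⟩ dσ + θ ∫_{∂B_θ(x₀)} ⟨∇u, ∇v⟩ dσ is independent of θ ∈ (0, d]. -/

import Mathlib

open MeasureTheory Real

noncomputable def lap2 (u : EuclideanSpace ℝ (Fin 2) → ℝ) (x : EuclideanSpace ℝ (Fin 2)) : ℝ :=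
  ∑ i : Fin 2, fderiv ℝ (fun y => fderiv ℝ u y (EuclideanSpace.single i 1)) x (EuclideanSpace.single i 1)

noncomputable def unitv (t : ℝ) : EuclideanSpace ℝ (Fin 2) :=
  (WithLp.equiv 2 (Fin 2 → ℝ)).symm ![Real.cos t, Real.sin t]

noncomputable def circpt (x₀ : EuclideanSpace ℝ (Fin 2)) (θ t : ℝ) : EuclideanSpace ℝ (Fin 2) :=
  x₀ + θ • unitv t

/-- The quadratic boundary form P(θ) on the circle ∂B_θ(x₀), written via the
arclength parametrization t ↦ x₀ + θ·(cos t, sin t) (so dσ = θ dt, and the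
outward unit normal at that point is ν = (cos t, sin t)). -/
noncomputable def Pform (u v : EuclideanSpace ℝ (Fin 2) → ℝ)
    (x₀ : EuclideanSpace ℝ (Fin 2)) (θ : ℝ) : ℝ :=
  -2 * θ * (θ * ∫ t in (0:ℝ)..(2 * π),
      fderiv ℝ u (circpt x₀ θ t) (unitv t) * fderiv ℝ v (circpt x₀ θ t) (unitv t))
  + θ * (θ * ∫ t in (0:ℝ)..(2 * π),
      (inner ℝ (gradient u (circpt x₀ θ t)) (gradient v (circpt x₀ θ t)) : ℝ))

/-!
Along the circle `t ↦ x₀ + θ (cos t, sin t)` write `r = ⟪∇·, ν⟫` and `s = ⟪∇·, τ⟫` for the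
radial and unit tangential derivatives. Since `⟪∇u, ∇v⟫ = r_u r_v + s_u s_v`, the integrand of
`P(θ)` in the angle `t` is `F = θ² (s_u s_v - r_u r_v)`. Differentiating along the polar
coordinates, `∂_θ r = ∂²_νν`, `∂_θ s = ∂²_ντ`, `∂_t r = θ ∂²_ντ + s` and `∂_t s = θ ∂²_ττ - r`;
harmonicity turns `∂²_ττ` into `-∂²_νν`, and then `∂_θ F = ∂_t G` for the `2π`-periodic
`G = θ (s_u r_v + r_u s_v)`. Integrating `∂_θ F` over `[θ₁, θ₂] × [0, 2π]` in either order gives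
`P(θ₂) - P(θ₁) = 0`.
-/

open Set Function InnerProductSpace
open scoped Interval

local notation "ℝ²" => EuclideanSpace ℝ (Fin 2)

section Calculus

variable {E F : Type*} [NormedAddCommGroup E] [NormedSpace ℝ E] [NormedAddCommGroup F]
  [NormedSpace ℝ F] {u : E → F} {x : E}

lemma ContDiffAt.differentiableAt_fderiv (hu : ContDiffAt ℝ 2 u x) :
    DifferentiableAt ℝ (fderiv ℝ u) x :=
  (hu.fderiv_right le_rfl).differentiableAt one_ne_zero

lemma fderiv_fderiv_apply_eq (hu : DifferentiableAt ℝ (fderiv ℝ u) x) (w z : E) :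
    fderiv ℝ (fun y => fderiv ℝ u y w) x z = fderiv ℝ (fderiv ℝ u) x z w := by
  rw [fderiv_clm_apply hu (differentiableAt_const w)]
  simp

lemma HasDerivAt.fderiv_apply {c w : ℝ → E} {c' w' : E} {s : ℝ} (hc : HasDerivAt c c' s)
    (hw : HasDerivAt w w' s) (hu : DifferentiableAt ℝ (fderiv ℝ u) (c s)) :
    HasDerivAt (fun r => fderiv ℝ u (c r) (w r))
      (fderiv ℝ (fderiv ℝ u) (c s) c' (w s) + fderiv ℝ u (c s) w') s :=
  (hu.hasFDerivAt.comp_hasDerivAt s hc).clm_apply hw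

end Calculus

lemma inner_gradient_eq_sum {E ι : Type*} [NormedAddCommGroup E] [InnerProductSpace ℝ E]
    [CompleteSpace E] [Fintype ι] (b : OrthonormalBasis ι ℝ E) (u v : E → ℝ) (x : E) :
    ⟪gradient u x, gradient v x⟫_ℝ = ∑ i, fderiv ℝ u x (b i) * fderiv ℝ v x (b i) := by
  rw [← b.sum_inner_mul_inner]
  congr 1 with i
  rw [inner_gradient_left, real_inner_comm, inner_gradient_left]

theorem intervalIntegral_eq_of_hasDerivAt_eq_hasDerivAt {F F' G : ℝ → ℝ → ℝ} {θ₁ θ₂ a b : ℝ}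
    (hF' : ContinuousOn (uncurry F') ([[θ₁, θ₂]] ×ˢ [[a, b]]))
    (hF₁ : IntervalIntegrable (F θ₁) volume a b) (hF₂ : IntervalIntegrable (F θ₂) volume a b)
    (hF : ∀ θ ∈ [[θ₁, θ₂]], ∀ t ∈ [[a, b]], HasDerivAt (F · t) (F' θ t) θ)
    (hG : ∀ θ ∈ Ioo (min θ₁ θ₂) (max θ₁ θ₂), ∀ t ∈ [[a, b]], HasDerivAt (G θ) (F' θ t) t)
    (hGab : ∀ θ ∈ Ioo (min θ₁ θ₂) (max θ₁ θ₂), G θ a = G θ b) :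
    ∫ t in a..b, F θ₁ t = ∫ t in a..b, F θ₂ t := by
  have hF'θ : ∀ t ∈ [[a, b]], IntervalIntegrable (F' · t) volume θ₁ θ₂ := fun t ht =>
    (hF'.comp (Continuous.prodMk_left t).continuousOn fun θ hθ => ⟨hθ, ht⟩).intervalIntegrable
  have hF't : ∀ θ ∈ [[θ₁, θ₂]], IntervalIntegrable (F' θ) volume a b := fun θ hθ =>
    (hF'.comp (Continuous.prodMk_right θ).continuousOn fun t ht => ⟨hθ, ht⟩).intervalIntegrable
  have hflux : ∀ θ ∈ Ioo (min θ₁ θ₂) (max θ₁ θ₂), ∫ t in a..b, F' θ t = 0 := fun θ hθ => by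
    rw [intervalIntegral.integral_eq_sub_of_hasDerivAt (hG θ hθ) (hF't θ (Ioo_subset_Icc_self hθ)),
      hGab θ hθ, sub_self]
  have hint : IntegrableOn (uncurry F') (Ι θ₁ θ₂ ×ˢ Ι a b) :=
    (hF'.integrableOn_compact (isCompact_uIcc.prod isCompact_uIcc)).mono_set
      (prod_mono uIoc_subset_uIcc uIoc_subset_uIcc)
  have hdiff : ∫ t in a..b, (F θ₂ t - F θ₁ t) = 0 := calc
    _ = ∫ t in a..b, ∫ θ in θ₁..θ₂, F' θ t := intervalIntegral.integral_congr fun t ht =>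
          (intervalIntegral.integral_eq_sub_of_hasDerivAt (fun θ hθ => hF θ hθ t ht)
            (hF'θ t ht)).symm
    _ = ∫ θ in θ₁..θ₂, ∫ t in a..b, F' θ t := (intervalIntegral_intervalIntegral_swap hint).symm
    _ = 0 := by
          refine intervalIntegral.integral_zero_ae ?_
          filter_upwards [Ioo_ae_eq_Ioc (μ := volume) (a := min θ₁ θ₂) (b := max θ₁ θ₂)]
            with θ hθ hmem
          exact hflux θ (hθ.mpr hmem)
  rw [intervalIntegral.integral_sub hF₂ hF₁, sub_eq_zero] at hdiff
  exact hdiff.symm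

noncomputable def tangv (t : ℝ) : ℝ² :=
  (WithLp.equiv 2 (Fin 2 → ℝ)).symm ![-Real.sin t, Real.cos t]

lemma unitv_eq (t : ℝ) :
    unitv t = Real.cos t • EuclideanSpace.single 0 1 + Real.sin t • EuclideanSpace.single 1 1 := by
  ext i; fin_cases i <;> simp [unitv]

lemma tangv_eq (t : ℝ) :
    tangv t = -Real.sin t • EuclideanSpace.single 0 1 + Real.cos t • EuclideanSpace.single 1 1 := by
  ext i; fin_cases i <;> simp [tangv]

lemma hasDerivAt_unitv (t : ℝ) : HasDerivAt unitv (tangv t) t := by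
  simp_rw [funext unitv_eq, tangv_eq]
  exact ((hasDerivAt_cos t).smul_const _).add ((hasDerivAt_sin t).smul_const _)

lemma hasDerivAt_tangv (t : ℝ) : HasDerivAt tangv (-unitv t) t := by
  simp_rw [funext tangv_eq, unitv_eq, neg_add, ← neg_smul]
  exact ((hasDerivAt_sin t).neg.smul_const _).add ((hasDerivAt_cos t).smul_const _)

lemma continuous_unitv : Continuous unitv :=
  continuous_iff_continuousAt.2 fun t => (hasDerivAt_unitv t).continuousAt

lemma continuous_tangv : Continuous tangv :=
  continuous_iff_continuousAt.2 fun t => (hasDerivAt_tangv t).continuousAt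

lemma unitv_two_pi : unitv (2 * π) = unitv 0 := by simp [unitv]

lemma tangv_two_pi : tangv (2 * π) = tangv 0 := by simp [tangv]

@[simp]
lemma norm_unitv (t : ℝ) : ‖unitv t‖ = 1 := by
  simp [EuclideanSpace.norm_eq, unitv]

@[simp]
lemma norm_tangv (t : ℝ) : ‖tangv t‖ = 1 := by
  simp [EuclideanSpace.norm_eq, tangv]

@[simp]
lemma inner_unitv_tangv (t : ℝ) : ⟪unitv t, tangv t⟫_ℝ = 0 := by
  simp [unitv, tangv, PiLp.inner_apply, Fin.sum_univ_two, mul_comm]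

lemma orthonormal_unitv_tangv (t : ℝ) : Orthonormal ℝ ![unitv t, tangv t] := by
  simp

noncomputable def polarBasis (t : ℝ) : OrthonormalBasis (Fin 2) ℝ ℝ² :=
  (basisOfOrthonormalOfCardEqFinrank (orthonormal_unitv_tangv t) (by simp)).toOrthonormalBasis
    (by simp)

lemma coe_polarBasis (t : ℝ) : ⇑(polarBasis t) = ![unitv t, tangv t] := by
  simp [polarBasis]

lemma lap2_eq_sum {ι : Type*} [Fintype ι] (b : OrthonormalBasis ι ℝ ℝ²) {u : ℝ² → ℝ} {x : ℝ²}
    (hu : DifferentiableAt ℝ (fderiv ℝ u) x) :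
    lap2 u x = ∑ i, fderiv ℝ (fderiv ℝ u) x (b i) (b i) := by
  have h := congrFun (laplacian_eq_iteratedFDeriv_orthonormalBasis u b) x
  rw [laplacian_eq_iteratedFDeriv_orthonormalBasis u (EuclideanSpace.basisFun (Fin 2) ℝ)] at h
  simp only [iteratedFDeriv_two_apply, Matrix.cons_val_zero, Matrix.cons_val_one] at h
  simp only [lap2, fderiv_fderiv_apply_eq hu, ← h, EuclideanSpace.basisFun_apply]

lemma inner_gradient_eq_polar (u v : ℝ² → ℝ) (x : ℝ²) (t : ℝ) :
    ⟪gradient u x, gradient v x⟫_ℝ = fderiv ℝ u x (unitv t) * fderiv ℝ v x (unitv t)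
      + fderiv ℝ u x (tangv t) * fderiv ℝ v x (tangv t) := by
  simp [inner_gradient_eq_sum (polarBasis t), coe_polarBasis]

lemma lap2_eq_polar {u : ℝ² → ℝ} {x : ℝ²} (hu : DifferentiableAt ℝ (fderiv ℝ u) x) (t : ℝ) :
    lap2 u x = fderiv ℝ (fderiv ℝ u) x (unitv t) (unitv t)
      + fderiv ℝ (fderiv ℝ u) x (tangv t) (tangv t) := by
  simp [lap2_eq_sum (polarBasis t) hu, coe_polarBasis]

section Circle

variable (x₀ : ℝ²)

lemma hasDerivAt_circpt_radius (θ t : ℝ) : HasDerivAt (fun s => circpt x₀ s t) (unitv t) θ := by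
  simpa [circpt] using ((hasDerivAt_id θ).smul_const (unitv t)).const_add x₀

lemma hasDerivAt_circpt_angle (θ t : ℝ) : HasDerivAt (circpt x₀ θ) (θ • tangv t) t :=
  ((hasDerivAt_unitv t).const_smul θ).const_add x₀

lemma continuous_circpt : Continuous (uncurry (circpt x₀)) :=
  continuous_const.add (continuous_fst.smul (continuous_unitv.comp continuous_snd))

lemma dist_circpt (θ t : ℝ) : dist (circpt x₀ θ t) x₀ = |θ| := by
  simp [dist_eq_norm, circpt, norm_smul]

lemma circpt_mem_closedBall {θ r : ℝ} (hθ : θ ∈ Icc 0 r) (t : ℝ) :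
    circpt x₀ θ t ∈ Metric.closedBall x₀ r := by
  rw [Metric.mem_closedBall, dist_circpt, abs_of_nonneg hθ.1]
  exact hθ.2

lemma circpt_mem_ball_diff {θ r : ℝ} (hθ : θ ∈ Ioo 0 r) (t : ℝ) :
    circpt x₀ θ t ∈ Metric.ball x₀ r \ {x₀} := by
  refine ⟨?_, fun h => ?_⟩
  · rw [Metric.mem_ball, dist_circpt, abs_of_pos hθ.1]
    exact hθ.2
  · have := dist_circpt x₀ θ t
    rw [mem_singleton_iff.mp h, dist_self, eq_comm, abs_eq_zero] at this
    exact hθ.1.ne' this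

end Circle

section Polar

variable (u v : ℝ² → ℝ) (x₀ : ℝ²)

noncomputable def radialDeriv (θ t : ℝ) : ℝ := fderiv ℝ u (circpt x₀ θ t) (unitv t)

noncomputable def tangentialDeriv (θ t : ℝ) : ℝ := fderiv ℝ u (circpt x₀ θ t) (tangv t)

noncomputable def radialDeriv2 (θ t : ℝ) : ℝ :=
  fderiv ℝ (fderiv ℝ u) (circpt x₀ θ t) (unitv t) (unitv t)

noncomputable def mixedDeriv2 (θ t : ℝ) : ℝ :=
  fderiv ℝ (fderiv ℝ u) (circpt x₀ θ t) (unitv t) (tangv t)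

noncomputable def PformDensity (θ t : ℝ) : ℝ :=
  θ ^ 2 * (tangentialDeriv u x₀ θ t * tangentialDeriv v x₀ θ t
    - radialDeriv u x₀ θ t * radialDeriv v x₀ θ t)

noncomputable def PformFlux (θ t : ℝ) : ℝ :=
  θ * (tangentialDeriv u x₀ θ t * radialDeriv v x₀ θ t
    + radialDeriv u x₀ θ t * tangentialDeriv v x₀ θ t)

noncomputable def PformDensityDeriv (θ t : ℝ) : ℝ :=
  2 * θ * (tangentialDeriv u x₀ θ t * tangentialDeriv v x₀ θ t
      - radialDeriv u x₀ θ t * radialDeriv v x₀ θ t)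
    + θ ^ 2 * (mixedDeriv2 u x₀ θ t * tangentialDeriv v x₀ θ t
      + tangentialDeriv u x₀ θ t * mixedDeriv2 v x₀ θ t
      - radialDeriv2 u x₀ θ t * radialDeriv v x₀ θ t
      - radialDeriv u x₀ θ t * radialDeriv2 v x₀ θ t)

variable {u v x₀} {θ t : ℝ}

lemma hasDerivAt_radialDeriv_radius (hu : DifferentiableAt ℝ (fderiv ℝ u) (circpt x₀ θ t)) :
    HasDerivAt (radialDeriv u x₀ · t) (radialDeriv2 u x₀ θ t) θ := by
  simpa [radialDeriv, radialDeriv2] using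
    (hasDerivAt_circpt_radius x₀ θ t).fderiv_apply (hasDerivAt_const θ (unitv t)) hu

lemma hasDerivAt_tangentialDeriv_radius
    (hu : DifferentiableAt ℝ (fderiv ℝ u) (circpt x₀ θ t)) :
    HasDerivAt (tangentialDeriv u x₀ · t) (mixedDeriv2 u x₀ θ t) θ := by
  simpa [tangentialDeriv, mixedDeriv2] using
    (hasDerivAt_circpt_radius x₀ θ t).fderiv_apply (hasDerivAt_const θ (tangv t)) hu

lemma hasDerivAt_radialDeriv_angle (hu : ContDiffAt ℝ 2 u (circpt x₀ θ t)) :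
    HasDerivAt (radialDeriv u x₀ θ) (θ * mixedDeriv2 u x₀ θ t + tangentialDeriv u x₀ θ t) t := by
  refine ((hasDerivAt_circpt_angle x₀ θ t).fderiv_apply (hasDerivAt_unitv t)
    hu.differentiableAt_fderiv).congr_deriv ?_
  simp [mixedDeriv2, tangentialDeriv, hu.isSymmSndFDerivAt (by simp) (tangv t)]

lemma hasDerivAt_tangentialDeriv_angle (hu : ContDiffAt ℝ 2 u (circpt x₀ θ t))
    (hΔu : lap2 u (circpt x₀ θ t) = 0) :
    HasDerivAt (tangentialDeriv u x₀ θ)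
      (-(θ * radialDeriv2 u x₀ θ t) - radialDeriv u x₀ θ t) t := by
  refine ((hasDerivAt_circpt_angle x₀ θ t).fderiv_apply (hasDerivAt_tangv t)
    hu.differentiableAt_fderiv).congr_deriv ?_
  rw [lap2_eq_polar hu.differentiableAt_fderiv t] at hΔu
  simp only [map_smul, smul_apply, smul_eq_mul, map_neg, radialDeriv2,
    radialDeriv]
  linear_combination θ * hΔu

lemma hasDerivAt_PformDensity (hu : DifferentiableAt ℝ (fderiv ℝ u) (circpt x₀ θ t))
    (hv : DifferentiableAt ℝ (fderiv ℝ v) (circpt x₀ θ t)) :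
    HasDerivAt (PformDensity u v x₀ · t) (PformDensityDeriv u v x₀ θ t) θ := by
  refine ((hasDerivAt_pow 2 θ).mul
    (((hasDerivAt_tangentialDeriv_radius hu).mul (hasDerivAt_tangentialDeriv_radius hv)).sub
      ((hasDerivAt_radialDeriv_radius hu).mul (hasDerivAt_radialDeriv_radius hv)))).congr_deriv ?_
  simp only [PformDensityDeriv, Pi.sub_apply, Pi.mul_apply]
  ring

lemma hasDerivAt_PformFlux (hu : ContDiffAt ℝ 2 u (circpt x₀ θ t))
    (hv : ContDiffAt ℝ 2 v (circpt x₀ θ t)) (hΔu : lap2 u (circpt x₀ θ t) = 0)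
    (hΔv : lap2 v (circpt x₀ θ t) = 0) :
    HasDerivAt (PformFlux u v x₀ θ) (PformDensityDeriv u v x₀ θ t) t := by
  refine ((((hasDerivAt_tangentialDeriv_angle hu hΔu).mul (hasDerivAt_radialDeriv_angle hv)).add
    ((hasDerivAt_radialDeriv_angle hu).mul (hasDerivAt_tangentialDeriv_angle hv hΔv))).const_mul
      θ).congr_deriv ?_
  simp only [PformDensityDeriv]
  ring

lemma PformFlux_two_pi : PformFlux u v x₀ θ (2 * π) = PformFlux u v x₀ θ 0 := by
  simp only [PformFlux, tangentialDeriv, radialDeriv, circpt, unitv_two_pi, tangv_two_pi]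

end Polar

section Continuity

variable {Ω : Set ℝ²} {u v : ℝ² → ℝ} (x₀ : ℝ²)

lemma ContinuousOn.comp_circpt {β : Type*} [TopologicalSpace β] {f : ℝ² → β}
    (hf : ContinuousOn f Ω) :
    ContinuousOn (fun p : ℝ × ℝ => f (circpt x₀ p.1 p.2)) (uncurry (circpt x₀) ⁻¹' Ω) :=
  hf.comp (continuous_circpt x₀).continuousOn (mapsTo_preimage _ _)

lemma intervalIntegrable_of_continuousOn_circpt {f : ℝ → ℝ → ℝ} {θ : ℝ}
    (hf : ContinuousOn (fun p : ℝ × ℝ => f p.1 p.2) (uncurry (circpt x₀) ⁻¹' Ω))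
    (hθ : ∀ t, circpt x₀ θ t ∈ Ω) (a b : ℝ) : IntervalIntegrable (f θ) volume a b :=
  (hf.comp_continuous (Continuous.prodMk_right θ) hθ).intervalIntegrable _ _

lemma continuousOn_radialDeriv (hΩ : IsOpen Ω) (hu : ContDiffOn ℝ 1 u Ω) :
    ContinuousOn (fun p : ℝ × ℝ => radialDeriv u x₀ p.1 p.2) (uncurry (circpt x₀) ⁻¹' Ω) :=
  ((hu.continuousOn_fderiv_of_isOpen hΩ le_rfl).comp_circpt x₀).clm_apply
    (continuous_unitv.comp continuous_snd).continuousOn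

lemma continuousOn_tangentialDeriv (hΩ : IsOpen Ω) (hu : ContDiffOn ℝ 1 u Ω) :
    ContinuousOn (fun p : ℝ × ℝ => tangentialDeriv u x₀ p.1 p.2) (uncurry (circpt x₀) ⁻¹' Ω) :=
  ((hu.continuousOn_fderiv_of_isOpen hΩ le_rfl).comp_circpt x₀).clm_apply
    (continuous_tangv.comp continuous_snd).continuousOn

lemma continuousOn_radialDeriv2 (hΩ : IsOpen Ω) (hu : ContDiffOn ℝ 2 u Ω) :
    ContinuousOn (fun p : ℝ × ℝ => radialDeriv2 u x₀ p.1 p.2) (uncurry (circpt x₀) ⁻¹' Ω) :=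
  (((hu.fderiv_of_isOpen hΩ le_rfl).continuousOn_fderiv_of_isOpen hΩ le_rfl).comp_circpt
    x₀).clm_apply (continuous_unitv.comp continuous_snd).continuousOn |>.clm_apply
    (continuous_unitv.comp continuous_snd).continuousOn

lemma continuousOn_mixedDeriv2 (hΩ : IsOpen Ω) (hu : ContDiffOn ℝ 2 u Ω) :
    ContinuousOn (fun p : ℝ × ℝ => mixedDeriv2 u x₀ p.1 p.2) (uncurry (circpt x₀) ⁻¹' Ω) :=
  (((hu.fderiv_of_isOpen hΩ le_rfl).continuousOn_fderiv_of_isOpen hΩ le_rfl).comp_circpt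
    x₀).clm_apply (continuous_unitv.comp continuous_snd).continuousOn |>.clm_apply
    (continuous_tangv.comp continuous_snd).continuousOn

lemma continuousOn_PformDensity (hΩ : IsOpen Ω) (hu : ContDiffOn ℝ 1 u Ω)
    (hv : ContDiffOn ℝ 1 v Ω) :
    ContinuousOn (fun p : ℝ × ℝ => PformDensity u v x₀ p.1 p.2) (uncurry (circpt x₀) ⁻¹' Ω) := by
  have := continuousOn_radialDeriv x₀ hΩ hu
  have := continuousOn_radialDeriv x₀ hΩ hv
  have := continuousOn_tangentialDeriv x₀ hΩ hu
  have := continuousOn_tangentialDeriv x₀ hΩ hv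
  simp only [PformDensity]
  fun_prop

lemma continuousOn_PformDensityDeriv (hΩ : IsOpen Ω) (hu : ContDiffOn ℝ 2 u Ω)
    (hv : ContDiffOn ℝ 2 v Ω) :
    ContinuousOn (uncurry (PformDensityDeriv u v x₀)) (uncurry (circpt x₀) ⁻¹' Ω) := by
  have := continuousOn_radialDeriv x₀ hΩ (hu.of_le one_le_two)
  have := continuousOn_radialDeriv x₀ hΩ (hv.of_le one_le_two)
  have := continuousOn_tangentialDeriv x₀ hΩ (hu.of_le one_le_two)
  have := continuousOn_tangentialDeriv x₀ hΩ (hv.of_le one_le_two)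
  have := continuousOn_radialDeriv2 x₀ hΩ hu
  have := continuousOn_radialDeriv2 x₀ hΩ hv
  have := continuousOn_mixedDeriv2 x₀ hΩ hu
  have := continuousOn_mixedDeriv2 x₀ hΩ hv
  simp only [uncurry_def, PformDensityDeriv]
  fun_prop

lemma Pform_eq_integral_PformDensity (hΩ : IsOpen Ω) (hu : ContDiffOn ℝ 1 u Ω)
    (hv : ContDiffOn ℝ 1 v Ω) {θ : ℝ} (hθ : ∀ t, circpt x₀ θ t ∈ Ω) :
    Pform u v x₀ θ = ∫ t in (0)..(2 * π), PformDensity u v x₀ θ t := by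
  have hr := intervalIntegrable_of_continuousOn_circpt x₀
    (f := fun θ t => radialDeriv u x₀ θ t * radialDeriv v x₀ θ t)
    ((continuousOn_radialDeriv x₀ hΩ hu).mul (continuousOn_radialDeriv x₀ hΩ hv)) hθ 0 (2 * π)
  have hs := intervalIntegrable_of_continuousOn_circpt x₀
    (f := fun θ t => tangentialDeriv u x₀ θ t * tangentialDeriv v x₀ θ t)
    ((continuousOn_tangentialDeriv x₀ hΩ hu).mul (continuousOn_tangentialDeriv x₀ hΩ hv)) hθ
    0 (2 * π)
  have hinner (t : ℝ) := inner_gradient_eq_polar u v (circpt x₀ θ t) t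
  simp only [Pform, PformDensity, hinner, intervalIntegral.integral_const_mul]
  simp only [radialDeriv, tangentialDeriv] at hr hs ⊢
  rw [intervalIntegral.integral_add hr hs, intervalIntegral.integral_sub hs hr]
  ring

end Continuity

theorem Pform_indep_of_radius_general (Ω : Set (EuclideanSpace ℝ (Fin 2))) (hΩ : IsOpen Ω)
    (x₀ : EuclideanSpace ℝ (Fin 2)) (d : ℝ)
    (hball : Metric.closedBall x₀ d ⊆ Ω)
    (u v : EuclideanSpace ℝ (Fin 2) → ℝ)
    (hu : ContDiffOn ℝ 2 u Ω) (hv : ContDiffOn ℝ 2 v Ω)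
    (huh : ∀ x ∈ Metric.ball x₀ d \ {x₀}, lap2 u x = 0)
    (hvh : ∀ x ∈ Metric.ball x₀ d \ {x₀}, lap2 v x = 0) :
    ∀ θ₁ ∈ Set.Ioc 0 d, ∀ θ₂ ∈ Set.Ioc 0 d,
      Pform u v x₀ θ₁ = Pform u v x₀ θ₂ := by
  intro θ₁ hθ₁ θ₂ hθ₂
  have hΩθ : ∀ θ ∈ Ioc 0 d, ∀ t, circpt x₀ θ t ∈ Ω := fun θ hθ t =>
    hball (circpt_mem_closedBall x₀ (Ioc_subset_Icc_self hθ) t)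
  have hsub : [[θ₁, θ₂]] ⊆ Ioc 0 d := ordConnected_Ioc.uIcc_subset hθ₁ hθ₂
  have hC2 {w : ℝ² → ℝ} (hw : ContDiffOn ℝ 2 w Ω) {θ : ℝ} (hθ : θ ∈ [[θ₁, θ₂]]) (t : ℝ) :
      ContDiffAt ℝ 2 w (circpt x₀ θ t) :=
    hw.contDiffAt (hΩ.mem_nhds (hΩθ θ (hsub hθ) t))
  have hu₁ := hu.of_le one_le_two
  have hv₁ := hv.of_le one_le_two
  have hint {θ : ℝ} (hθ : θ ∈ Ioc 0 d) :=
    intervalIntegrable_of_continuousOn_circpt x₀ (continuousOn_PformDensity x₀ hΩ hu₁ hv₁)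
      (hΩθ θ hθ) 0 (2 * π)
  rw [Pform_eq_integral_PformDensity x₀ hΩ hu₁ hv₁ (hΩθ θ₁ hθ₁),
    Pform_eq_integral_PformDensity x₀ hΩ hu₁ hv₁ (hΩθ θ₂ hθ₂)]
  refine intervalIntegral_eq_of_hasDerivAt_eq_hasDerivAt (G := PformFlux u v x₀)
    ((continuousOn_PformDensityDeriv x₀ hΩ hu hv).mono fun p hp => hΩθ p.1 (hsub hp.1) p.2)
    (hint hθ₁) (hint hθ₂) (fun θ hθ t _ => hasDerivAt_PformDensity
      (hC2 hu hθ t).differentiableAt_fderiv (hC2 hv hθ t).differentiableAt_fderiv)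
    (fun θ hθ t _ => ?_) fun θ _ => PformFlux_two_pi.symm
  have hmem := circpt_mem_ball_diff x₀
    (Ioo_subset_Ioo (le_min hθ₁.1.le hθ₂.1.le) (max_le hθ₁.2 hθ₂.2) hθ) t
  exact hasDerivAt_PformFlux (hC2 hu (Ioo_subset_Icc_self hθ) t)
    (hC2 hv (Ioo_subset_Icc_self hθ) t) (huh _ hmem) (hvh _ hmem)

theorem Pform_indep_of_radius (Ω : Set (EuclideanSpace ℝ (Fin 2))) (hΩ : IsOpen Ω)
    (x₀ : EuclideanSpace ℝ (Fin 2)) (hx₀ : x₀ ∈ Ω) (d : ℝ) (hd : 0 < d)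
    (hball : Metric.closedBall x₀ d ⊆ Ω)
    (u v : EuclideanSpace ℝ (Fin 2) → ℝ)
    (hu : ContDiffOn ℝ 2 u Ω) (hv : ContDiffOn ℝ 2 v Ω)
    (huh : ∀ x ∈ Metric.ball x₀ d \ {x₀}, lap2 u x = 0)
    (hvh : ∀ x ∈ Metric.ball x₀ d \ {x₀}, lap2 v x = 0) :
    ∀ θ₁ ∈ Set.Ioc 0 d, ∀ θ₂ ∈ Set.Ioc 0 d,
      Pform u v x₀ θ₁ = Pform u v x₀ θ₂ :=
  Pform_indep_of_radius_general Ω hΩ x₀ d hball u v hu hv huh hvh
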